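/- With the system (xⱼ; xⱼ*)_{j≥0} in c defined by x₀ ≡ 1, x₀* = Σ_k 2^{-k} δ_k, xⱼ = -e_j + Σ_{k>j} e_k, xⱼ* = -δ_j/2 + Σ_{k>j} 2^{j-k-1} δ_k: if y ∈ c satisfies xⱼ*(y) = 0 for all j ≥ 0, then y = 0. That is, the system is total. -/

import Mathlib

open scoped ENNReal
set_option synthInstance.maxHeartbeats 1000000
set_option maxHeartbeats 1000000

/-- The space of `X`-valued convergent sequences, as a subspace of `ℓ^∞(X)` (with the
sup norm). -/
noncomputable def cSubX (X : Type*) [NormedAddCommGroup X] [NormedSpace ℝ X] :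
    Submodule ℝ (lp (fun _ : ℕ => X) ∞) where
  carrier := {y | ∃ L : X, Filter.Tendsto (fun n => y n) Filter.atTop (nhds L)}
  zero_mem' := ⟨0, by simp⟩
  add_mem' := by
    rintro y z ⟨L1, h1⟩ ⟨L2, h2⟩
    refine ⟨L1 + L2, ?_⟩
    have := h1.add h2
    simpa [lp.coeFn_add] using this
  smul_mem' := by
    rintro c y ⟨L, h⟩
    refine ⟨c • L, ?_⟩
    have := h.const_smul c
    simpa [lp.coeFn_smul] using this

/-- The space `c` of convergent real sequences with the sup norm. -/
noncomputable abbrev cSub : Submodule ℝ (lp (fun _ : ℕ => ℝ) ∞) := cSubX ℝ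

/-- The coordinate functional `δ_k : y ↦ y_k` on `c`. -/
noncomputable def cCoord (k : ℕ) : cSub →L[ℝ] ℝ :=
  LinearMap.mkContinuous
    { toFun := fun y => (y : lp (fun _ : ℕ => ℝ) ∞) k
      map_add' := by intro y z; simp
      map_smul' := by intro c y; simp }
    1
    (fun y => by
      rw [one_mul]
      exact lp.norm_apply_le_norm ENNReal.top_ne_zero (y : lp (fun _ : ℕ => ℝ) ∞) k)

/-- `x_j`: for `j = 0` the constant sequence `1`; for `j ≥ 1` the sequence which is `0` on
(paper, `1`-based) coordinates `< j`, `-1` at coordinate `j` and `1` at coordinates `> j`.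
Entry `k` of the underlying function is the paper's coordinate `k + 1`. -/
noncomputable def cVec (j : ℕ) : cSub :=
  ⟨⟨fun k => if k + 1 < j then 0 else if k + 1 = j then -1 else 1, by
      apply memℓp_infty
      refine ⟨1, ?_⟩
      rintro r ⟨k, rfl⟩
      dsimp only
      split_ifs <;> simp⟩,
   ⟨1, by
      refine Filter.Tendsto.congr' ?_ tendsto_const_nhds
      filter_upwards [Filter.eventually_ge_atTop j] with k hk
      have h1 : ¬ (k + 1 < j) := by omega
      have h2 : ¬ (k + 1 = j) := by omega
      simp [h1, h2]⟩⟩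

/-- `x_j^*`: `x_0^* = ∑_{k ≥ 1} 2^{-k} δ_k`, and for `j ≥ 1`,
`x_j^* = -δ_j/2 + ∑_{k > j} 2^{j-k-1} δ_k` (again with the `1`-based coordinate `k`
corresponding to entry `k - 1` of the underlying function, so that `δ` of paper
coordinate `k` is `cCoord (k-1)`). -/
noncomputable def cVecStar (j : ℕ) : cSub →L[ℝ] ℝ :=
  if j = 0 then ∑' k : ℕ, ((1 : ℝ) / 2) ^ (k + 1) • cCoord k
  else (-(1 / 2 : ℝ)) • cCoord (j - 1) + ∑' i : ℕ, ((1 : ℝ) / 2) ^ (i + 2) • cCoord (j + i)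

/-! Write `T m = ∑_{i ≥ 0} 2^{-i-1} y_{m+i}` (`halfTail`) for the weighted tails of `y`, so that
`T m = (y_m + T (m+1)) / 2`. The functional `x_{m+1}^*` evaluates to `(T (m+1) - y_m) / 2`, so the
hypotheses say `y_m = T (m+1) = (y_{m+1} + T (m+2)) / 2 = y_{m+1}`. Hence `y` is constant, and
`x_0^*(y) = T 0 = y_0` vanishes. -/

section HalfTail

variable {f : ℕ → ℝ} {C : ℝ}

noncomputable def halfTail (f : ℕ → ℝ) (m : ℕ) : ℝ :=
  ∑' i, (1 / 2 : ℝ) ^ (i + 1) * f (m + i)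

lemma summable_half_pow_mul_of_abs_le (hf : ∀ k, |f k| ≤ C) (m : ℕ) :
    Summable fun i => (1 / 2 : ℝ) ^ (i + 1) * f (m + i) := by
  refine Summable.of_norm_bounded
    ((summable_geometric_two.mul_left (1 / 2)).mul_right C) fun i => ?_
  rw [Real.norm_eq_abs, abs_mul, abs_of_pos (by positivity), pow_succ']
  exact mul_le_mul_of_nonneg_left (hf _) (by positivity)

lemma halfTail_eq_add (hf : ∀ k, |f k| ≤ C) (m : ℕ) :
    halfTail f m = (f m + halfTail f (m + 1)) / 2 := by
  have hshift : ∀ i, (1 / 2 : ℝ) ^ (i + 1 + 1) * f (m + (i + 1)) =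
      1 / 2 * ((1 / 2) ^ (i + 1) * f (m + 1 + i)) := fun i => by
    rw [show m + (i + 1) = m + 1 + i by omega]
    ring
  unfold halfTail
  rw [(summable_half_pow_mul_of_abs_le hf m).tsum_eq_zero_add, tsum_congr hshift, tsum_mul_left]
  ring_nf

lemma halfTail_const (a : ℝ) (m : ℕ) : halfTail (fun _ => a) m = a := by
  simp only [halfTail, pow_succ, mul_comm _ (1 / 2 : ℝ), mul_assoc, tsum_mul_left,
    tsum_mul_right, tsum_geometric_two]
  ring

lemma eq_const_of_eq_halfTail_succ (hf : ∀ k, |f k| ≤ C)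
    (hrec : ∀ m, f m = halfTail f (m + 1)) : f = fun _ => f 0 := by
  have hstep : ∀ m, f (m + 1) = f m := fun m => by
    linarith [hrec m, hrec (m + 1), halfTail_eq_add hf (m + 1)]
  funext m
  induction m with
  | zero => rfl
  | succ m ih => rw [hstep, ih]

end HalfTail

lemma ContinuousLinearMap.tsum_smul_apply {ι E F : Type*} [NormedAddCommGroup E]
    [NormedSpace ℝ E] [NormedAddCommGroup F] [NormedSpace ℝ F] [CompleteSpace F]
    {w : ι → ℝ} (hw : Summable w) {φ : ι → E →L[ℝ] F} {C : ℝ} (hφ : ∀ i, ‖φ i‖ ≤ C)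
    (x : E) : (∑' i, w i • φ i) x = ∑' i, w i • φ i x := by
  have hsum : Summable fun i => w i • φ i := by
    refine Summable.of_norm_bounded (hw.norm.mul_right C) fun i => ?_
    rw [norm_smul]
    exact mul_le_mul_of_nonneg_left (hφ i) (norm_nonneg _)
  exact (ContinuousLinearMap.apply ℝ F x).map_tsum hsum

lemma norm_cCoord_le_one (k : ℕ) : ‖cCoord k‖ ≤ 1 :=
  LinearMap.mkContinuous_norm_le _ zero_le_one _

lemma abs_cCoord_apply_le (k : ℕ) (y : cSub) : |cCoord k y| ≤ ‖y‖ :=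
  lp.norm_apply_le_norm ENNReal.top_ne_zero (y : lp (fun _ : ℕ => ℝ) ∞) k

lemma cSub_ext {y z : cSub} (h : ∀ k, cCoord k y = cCoord k z) : y = z :=
  Subtype.ext <| lp.ext <| funext h

lemma cVecStar_zero_apply (y : cSub) : cVecStar 0 y = halfTail (fun k => cCoord k y) 0 := by
  rw [cVecStar, if_pos rfl, ContinuousLinearMap.tsum_smul_apply
    ((summable_nat_add_iff 1).mpr summable_geometric_two) norm_cCoord_le_one]
  simp only [halfTail, smul_eq_mul, zero_add]

lemma cVecStar_succ_apply (m : ℕ) (y : cSub) :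
    cVecStar (m + 1) y = (-cCoord m y + halfTail (fun k => cCoord k y) (m + 1)) / 2 := by
  rw [cVecStar, if_neg m.succ_ne_zero, add_apply,
    ContinuousLinearMap.tsum_smul_apply ((summable_nat_add_iff 2).mpr summable_geometric_two)
      fun _ => norm_cCoord_le_one _]
  have hhalf : ∀ i, (1 / 2 : ℝ) ^ (i + 2) • cCoord (m + 1 + i) y =
      1 / 2 * ((1 / 2) ^ (i + 1) * cCoord (m + 1 + i) y) := fun i => by
    rw [smul_eq_mul]
    ring
  rw [tsum_congr hhalf, tsum_mul_left, halfTail, smul_apply, Nat.add_sub_cancel, smul_eq_mul]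
  ring

/-- The system `(xⱼ; xⱼ^*)_{j ≥ 0}` in `c` is total: if `y ∈ c`
satisfies `xⱼ^*(y) = 0` for all `j`, then `y = 0`. -/
theorem stmt10 (y : cSub) (h : ∀ j, cVecStar j y = 0) : y = 0 := by
  set f : ℕ → ℝ := fun k => cCoord k y
  have hrec : ∀ m, f m = halfTail f (m + 1) := fun m => by
    linarith [h (m + 1), cVecStar_succ_apply m y]
  have hconst : f = fun _ => f 0 :=
    eq_const_of_eq_halfTail_succ (abs_cCoord_apply_le · y) hrec
  have hf0 : f 0 = 0 := by
    rw [← halfTail_const (f 0) 0, ← hconst, ← cVecStar_zero_apply, h 0]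
  exact cSub_ext fun k => by
    rw [map_zero]
    exact (congr_fun hconst k).trans hf0
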